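/- Let (X, μ) be a measure space, φ an Orlicz function satisfying the Δ₂-condition, f ∈ L_φ and (f_n) ⊆ L_φ with ‖f_n‖_φ → ‖f‖_φ and f_n → f in measure. Then ‖f_n − f‖_φ → 0. (Kadec–Klee property for convergence in measure of commutative Orlicz spaces.) -/

import Mathlib

/-!
Under Δ₂ the modular `t ↦ ρ(t • g)` is finite and continuous, so `ρ(g / ‖g‖) = 1` whenever
`‖g‖ > 0`, and `‖gₙ‖ → 0` iff `ρ(c • gₙ) → 0` for every `c`. Along a subsequence converging
a.e., the normalized functions `fₙ / ‖fₙ‖` and `f / ‖f‖` all have modular one; dominating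
`φ|p - q|` by `K (φ|p| + φ|q|)` and applying Fatou's lemma to the difference gives
`ρ(fₙ / ‖fₙ‖ - f / ‖f‖) → 0`. Since `fₙ - f` is a bounded multiple of this difference plus
the multiple `(‖fₙ‖ - ‖f‖) / ‖f‖` of `f`, this yields `ρ(c • (fₙ - f)) → 0`.
-/

open MeasureTheory Filter ENNReal

/-- The Orlicz modular `ρ(f) = ∫ φ(|f|) dμ`. -/
noncomputable def orliczModular (φ : ℝ → ℝ) {X : Type*} [MeasurableSpace X]
    (μ : Measure X) (f : X → ℝ) : ℝ≥0∞ :=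
  ∫⁻ x, ENNReal.ofReal (φ |f x|) ∂μ

/-- The Luxemburg norm `‖f‖_φ = inf {c > 0 : ∫ φ(|f|/c) dμ ≤ 1}`. -/
noncomputable def luxemburgNorm (φ : ℝ → ℝ) {X : Type*} [MeasurableSpace X]
    (μ : Measure X) (f : X → ℝ) : ℝ :=
  sInf {c : ℝ | 0 < c ∧ orliczModular φ μ (fun x => f x / c) ≤ 1}

/-- Membership in the Orlicz space `L_φ`. -/
def MemOrlicz (φ : ℝ → ℝ) {X : Type*} [MeasurableSpace X]
    (μ : Measure X) (f : X → ℝ) : Prop :=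
  Measurable f ∧ ∃ lam > (0 : ℝ), orliczModular φ μ (fun x => lam * f x) < ⊤

open Topology NNReal

def DeltaTwoCondition (φ : ℝ → ℝ) (K : ℝ≥0) : Prop :=
  ∀ u, 0 ≤ u → φ (2 * u) ≤ K * φ u

section Pointwise

variable {φ : ℝ → ℝ}

lemma nonneg_of_monotoneOn_Ici (hmono : MonotoneOn φ (Set.Ici 0)) (h0 : φ 0 = 0) {u : ℝ}
    (hu : 0 ≤ u) : 0 ≤ φ u :=
  h0 ▸ hmono Set.self_mem_Ici hu hu

lemma apply_le_add_apply_two_mul (hmono : MonotoneOn φ (Set.Ici 0)) (h0 : φ 0 = 0) {s a b : ℝ}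
    (hs : 0 ≤ s) (ha : 0 ≤ a) (hb : 0 ≤ b) (h : s ≤ a + b) : φ s ≤ φ (2 * a) + φ (2 * b) := by
  have hφa := nonneg_of_monotoneOn_Ici hmono h0 (by positivity : 0 ≤ 2 * a)
  have hφb := nonneg_of_monotoneOn_Ici hmono h0 (by positivity : 0 ≤ 2 * b)
  rcases le_total a b with hab | hab
  · have := hmono hs (by positivity : (0 : ℝ) ≤ 2 * b) (by linarith)
    linarith
  · have := hmono hs (by positivity : (0 : ℝ) ≤ 2 * a) (by linarith)
    linarith

lemma DeltaTwoCondition.two_pow_mul_le {K : ℝ≥0} (hΔ : DeltaTwoCondition φ K) (m : ℕ)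
    {u : ℝ} (hu : 0 ≤ u) : φ (2 ^ m * u) ≤ K ^ m * φ u := by
  induction m with
  | zero => simp
  | succ m ih =>
    calc φ (2 ^ (m + 1) * u) = φ (2 * (2 ^ m * u)) := by ring_nf
      _ ≤ K * φ (2 ^ m * u) := hΔ _ (by positivity)
      _ ≤ K * (K ^ m * φ u) := by gcongr
      _ = K ^ (m + 1) * φ u := by ring

lemma DeltaTwoCondition.abs_sub_le {K : ℝ≥0} (hΔ : DeltaTwoCondition φ K)
    (hmono : MonotoneOn φ (Set.Ici 0)) (h0 : φ 0 = 0) (p q : ℝ) :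
    φ |p - q| ≤ K * (φ |p| + φ |q|) := by
  calc φ |p - q| ≤ φ (2 * |p|) + φ (2 * |q|) :=
        apply_le_add_apply_two_mul hmono h0 (abs_nonneg _) (abs_nonneg _) (abs_nonneg _)
          (abs_sub _ _)
    _ ≤ K * φ |p| + K * φ |q| := add_le_add (hΔ _ (abs_nonneg _)) (hΔ _ (abs_nonneg _))
    _ = K * (φ |p| + φ |q|) := by ring

lemma continuous_ofReal_comp_abs (hcont : ContinuousOn φ (Set.Ici 0)) :
    Continuous fun s : ℝ => ENNReal.ofReal (φ |s|) :=
  ENNReal.continuous_ofReal.comp <|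
    hcont.comp_continuous continuous_abs fun s => Set.mem_Ici.2 (abs_nonneg s)

end Pointwise

section Modular

variable {X : Type*} [MeasurableSpace X] {μ : Measure X} {φ : ℝ → ℝ}

lemma measurable_ofReal_comp_abs (hcont : ContinuousOn φ (Set.Ici 0)) {g : X → ℝ}
    (hg : Measurable g) : Measurable fun x => ENNReal.ofReal (φ |g x|) :=
  (continuous_ofReal_comp_abs hcont).measurable.comp hg

lemma orliczModular_mono (hmono : MonotoneOn φ (Set.Ici 0)) {g h : X → ℝ}
    (hgh : ∀ x, |g x| ≤ |h x|) : orliczModular φ μ g ≤ orliczModular φ μ h :=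
  lintegral_mono fun x => ENNReal.ofReal_le_ofReal <|
    hmono (Set.mem_Ici.2 (abs_nonneg _)) (Set.mem_Ici.2 (abs_nonneg _)) (hgh x)

lemma orliczModular_smul_mono (hmono : MonotoneOn φ (Set.Ici 0)) {s t : ℝ} (hst : |s| ≤ |t|)
    (g : X → ℝ) : orliczModular φ μ (s • g) ≤ orliczModular φ μ (t • g) :=
  orliczModular_mono hmono fun x => by
    simp only [Pi.smul_apply, smul_eq_mul, abs_mul]
    exact mul_le_mul_of_nonneg_right hst (abs_nonneg _)

lemma orliczModular_zero_smul (h0 : φ 0 = 0) (g : X → ℝ) :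
    orliczModular φ μ ((0 : ℝ) • g) = 0 := by
  simp [orliczModular, h0]

lemma orliczModular_le_add (hmono : MonotoneOn φ (Set.Ici 0))
    (hcont : ContinuousOn φ (Set.Ici 0)) (h0 : φ 0 = 0) {u p q : X → ℝ} (hp : Measurable p)
    (hupq : ∀ x, |u x| ≤ |p x| + |q x|) :
    orliczModular φ μ u ≤ orliczModular φ μ ((2 : ℝ) • p) + orliczModular φ μ ((2 : ℝ) • q) := by
  have hφ : ∀ s : ℝ, 0 ≤ φ |s| := fun s => nonneg_of_monotoneOn_Ici hmono h0 (abs_nonneg s)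
  calc orliczModular φ μ u
      ≤ ∫⁻ x, ENNReal.ofReal (φ |2 * p x|) + ENNReal.ofReal (φ |2 * q x|) ∂μ := by
        refine lintegral_mono fun x => ?_
        rw [← ENNReal.ofReal_add (hφ _) (hφ _), abs_mul, abs_mul, abs_two]
        exact ENNReal.ofReal_le_ofReal <| apply_le_add_apply_two_mul hmono h0 (abs_nonneg _)
          (abs_nonneg _) (abs_nonneg _) (hupq x)
    _ = _ := lintegral_add_left (measurable_ofReal_comp_abs hcont (hp.const_mul 2)) _

lemma orliczModular_smul_le_of_abs_le_two_pow (hmono : MonotoneOn φ (Set.Ici 0)) {K : ℝ≥0}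
    (hΔ : DeltaTwoCondition φ K) {c : ℝ} {m : ℕ} (hc : |c| ≤ 2 ^ m) (g : X → ℝ) :
    orliczModular φ μ (c • g) ≤ (K : ℝ≥0∞) ^ m * orliczModular φ μ g := by
  calc orliczModular φ μ (c • g) ≤ orliczModular φ μ ((2 ^ m : ℝ) • g) :=
        orliczModular_smul_mono hmono (hc.trans (le_abs_self _)) g
    _ ≤ ∫⁻ x, (K : ℝ≥0∞) ^ m * ENNReal.ofReal (φ |g x|) ∂μ := by
        refine lintegral_mono fun x => ?_
        rw [← ENNReal.coe_pow, ← ENNReal.ofReal_coe_nnreal, ← ENNReal.ofReal_mul (by positivity)]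
        refine ENNReal.ofReal_le_ofReal ?_
        simpa [abs_mul] using hΔ.two_pow_mul_le m (abs_nonneg (g x))
    _ = (K : ℝ≥0∞) ^ m * orliczModular φ μ g :=
        lintegral_const_mul' _ _ (ENNReal.pow_ne_top ENNReal.coe_ne_top)

lemma orliczModular_smul_lt_top (hmono : MonotoneOn φ (Set.Ici 0)) {K : ℝ≥0}
    (hΔ : DeltaTwoCondition φ K) {g : X → ℝ} (hg : MemOrlicz φ μ g) (c : ℝ) :
    orliczModular φ μ (c • g) < ⊤ := by
  obtain ⟨-, lam, hlam, hfin⟩ := hg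
  obtain ⟨m, hm⟩ := pow_unbounded_of_one_lt |c / lam| one_lt_two
  have hcg : c • g = (c / lam) • (lam • g) := by rw [smul_smul, div_mul_cancel₀ _ hlam.ne']
  rw [hcg]
  exact (orliczModular_smul_le_of_abs_le_two_pow hmono hΔ hm.le _).trans_lt
    (ENNReal.mul_lt_top (ENNReal.pow_lt_top ENNReal.coe_lt_top) hfin)

lemma orliczModular_smul_le (hconv : ConvexOn ℝ (Set.Ici 0) φ) (h0 : φ 0 = 0) {t : ℝ}
    (ht0 : 0 ≤ t) (ht1 : t ≤ 1) (g : X → ℝ) :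
    orliczModular φ μ (t • g) ≤ ENNReal.ofReal t * orliczModular φ μ g := by
  calc orliczModular φ μ (t • g) ≤ ∫⁻ x, ENNReal.ofReal t * ENNReal.ofReal (φ |g x|) ∂μ := by
        refine lintegral_mono fun x => ?_
        rw [← ENNReal.ofReal_mul ht0]
        refine ENNReal.ofReal_le_ofReal ?_
        have := hconv.2 (Set.mem_Ici.2 (abs_nonneg (g x))) Set.self_mem_Ici ht0
          (sub_nonneg.2 ht1) (by ring)
        simpa [abs_mul, abs_of_nonneg ht0, h0] using this
    _ = ENNReal.ofReal t * orliczModular φ μ g := lintegral_const_mul' _ _ ENNReal.ofReal_ne_top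

lemma continuous_orliczModular_smul (hmono : MonotoneOn φ (Set.Ici 0))
    (hcont : ContinuousOn φ (Set.Ici 0)) {K : ℝ≥0} (hΔ : DeltaTwoCondition φ K) {g : X → ℝ}
    (hg : MemOrlicz φ μ g) : Continuous fun t : ℝ => orliczModular φ μ (t • g) := by
  refine continuous_iff_continuousAt.2 fun t => ?_
  have hnear : ∀ᶠ s in 𝓝 t, |s| ≤ |t| + 1 := by
    filter_upwards [Metric.ball_mem_nhds t one_pos] with s hs
    rw [Metric.mem_ball, Real.dist_eq] at hs
    linarith [abs_sub_abs_le_abs_sub s t]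
  refine tendsto_lintegral_filter_of_dominated_convergence _
    (Eventually.of_forall fun s => measurable_ofReal_comp_abs hcont (hg.1.const_mul s))
    (hnear.mono fun s hs => Eventually.of_forall fun x => ?_)
    (orliczModular_smul_lt_top hmono hΔ hg (|t| + 1)).ne
    (Eventually.of_forall fun x => ?_)
  · refine ENNReal.ofReal_le_ofReal <| hmono (Set.mem_Ici.2 (abs_nonneg _))
      (Set.mem_Ici.2 (abs_nonneg _)) ?_
    simp only [Pi.smul_apply, smul_eq_mul, abs_mul]
    exact mul_le_mul_of_nonneg_right (hs.trans (le_abs_self _)) (abs_nonneg (g x))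
  · exact ((continuous_ofReal_comp_abs hcont).comp (continuous_mul_const (g x))).continuousAt

end Modular

section Luxemburg

variable {X : Type*} [MeasurableSpace X] {μ : Measure X} {φ : ℝ → ℝ}

lemma luxemburgNorm_eq_sInf (g : X → ℝ) :
    luxemburgNorm φ μ g = sInf {c : ℝ | 0 < c ∧ orliczModular φ μ (c⁻¹ • g) ≤ 1} := by
  simp only [luxemburgNorm, div_eq_inv_mul]
  rfl

lemma luxemburgNorm_nonneg (g : X → ℝ) : 0 ≤ luxemburgNorm φ μ g :=
  Real.sInf_nonneg fun _ hc => hc.1.le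

lemma luxemburgNorm_le {g : X → ℝ} {c : ℝ} (hc : 0 < c)
    (h : orliczModular φ μ (c⁻¹ • g) ≤ 1) : luxemburgNorm φ μ g ≤ c := by
  rw [luxemburgNorm_eq_sInf]
  exact csInf_le ⟨0, fun _ hx => hx.1.le⟩ ⟨hc, h⟩

lemma exists_orliczModular_inv_smul_le_one (hmono : MonotoneOn φ (Set.Ici 0))
    (hcont : ContinuousOn φ (Set.Ici 0)) (h0 : φ 0 = 0) {K : ℝ≥0} (hΔ : DeltaTwoCondition φ K)
    {g : X → ℝ} (hg : MemOrlicz φ μ g) : ∃ c : ℝ, 0 < c ∧ orliczModular φ μ (c⁻¹ • g) ≤ 1 := by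
  have hsmall : ∀ᶠ t in 𝓝 (0 : ℝ), orliczModular φ μ (t • g) < 1 :=
    (continuous_orliczModular_smul hmono hcont hΔ hg).continuousAt.eventually
      (gt_mem_nhds (by simp only [orliczModular_zero_smul h0]; exact one_pos))
  obtain ⟨t, ht1, ht0⟩ := ((hsmall.filter_mono nhdsWithin_le_nhds).and
    (self_mem_nhdsWithin (s := Set.Ioi (0 : ℝ)) (a := 0))).exists
  exact ⟨t⁻¹, inv_pos.2 ht0, by rw [inv_inv]; exact ht1.le⟩

lemma orliczModular_inv_smul_le_one_of_luxemburgNorm_lt (hmono : MonotoneOn φ (Set.Ici 0))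
    (hcont : ContinuousOn φ (Set.Ici 0)) (h0 : φ 0 = 0) {K : ℝ≥0} (hΔ : DeltaTwoCondition φ K)
    {g : X → ℝ} (hg : MemOrlicz φ μ g) {c : ℝ} (hc : luxemburgNorm φ μ g < c) :
    orliczModular φ μ (c⁻¹ • g) ≤ 1 := by
  rw [luxemburgNorm_eq_sInf] at hc
  obtain ⟨c', ⟨hc'0, hc'⟩, hc'c⟩ :=
    exists_lt_of_csInf_lt (exists_orliczModular_inv_smul_le_one hmono hcont h0 hΔ hg) hc
  refine (orliczModular_smul_mono hmono ?_ g).trans hc'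
  rw [abs_inv, abs_inv, abs_of_pos hc'0, abs_of_pos (hc'0.trans hc'c)]
  exact inv_anti₀ hc'0 hc'c.le

lemma orliczModular_inv_luxemburgNorm_smul (hmono : MonotoneOn φ (Set.Ici 0))
    (hcont : ContinuousOn φ (Set.Ici 0)) (h0 : φ 0 = 0) {K : ℝ≥0} (hΔ : DeltaTwoCondition φ K)
    {g : X → ℝ} (hg : MemOrlicz φ μ g) (ha : 0 < luxemburgNorm φ μ g) :
    orliczModular φ μ ((luxemburgNorm φ μ g)⁻¹ • g) = 1 := by
  set a := luxemburgNorm φ μ g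
  have hcontAt : ContinuousAt (fun c : ℝ => orliczModular φ μ (c⁻¹ • g)) a :=
    (continuous_orliczModular_smul hmono hcont hΔ hg).continuousAt.comp
      (continuousAt_inv₀ ha.ne')
  refine le_antisymm ?_ (not_lt.1 fun hlt => ?_)
  · refine le_of_tendsto (hcontAt.mono_left (nhdsWithin_le_nhds (s := Set.Ioi a))) ?_
    filter_upwards [self_mem_nhdsWithin (s := Set.Ioi a) (a := a)] with c (hc : a < c)
    exact orliczModular_inv_smul_le_one_of_luxemburgNorm_lt hmono hcont h0 hΔ hg hc
  · have hnear : ∀ᶠ c in 𝓝 a, orliczModular φ μ (c⁻¹ • g) < 1 ∧ 0 < c :=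
      (hcontAt.eventually (gt_mem_nhds hlt)).and (lt_mem_nhds ha)
    obtain ⟨c, ⟨hc1, hc0⟩, hca⟩ := ((hnear.filter_mono nhdsWithin_le_nhds).and
      (self_mem_nhdsWithin (s := Set.Iio a) (a := a))).exists
    exact (luxemburgNorm_le hc0 hc1.le).not_gt hca

lemma orliczModular_le_of_luxemburgNorm_lt (hconv : ConvexOn ℝ (Set.Ici 0) φ)
    (hmono : MonotoneOn φ (Set.Ici 0)) (hcont : ContinuousOn φ (Set.Ici 0)) (h0 : φ 0 = 0)
    {K : ℝ≥0} (hΔ : DeltaTwoCondition φ K) {g : X → ℝ} (hg : MemOrlicz φ μ g) {t : ℝ}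
    (ht : luxemburgNorm φ μ g < t) (ht1 : t ≤ 1) :
    orliczModular φ μ g ≤ ENNReal.ofReal t := by
  have ht0 : 0 < t := (luxemburgNorm_nonneg g).trans_lt ht
  calc orliczModular φ μ g = orliczModular φ μ (t • t⁻¹ • g) := by
        rw [smul_smul, mul_inv_cancel₀ ht0.ne', one_smul]
    _ ≤ ENNReal.ofReal t * orliczModular φ μ (t⁻¹ • g) := orliczModular_smul_le hconv h0 ht0.le ht1 _
    _ ≤ ENNReal.ofReal t * 1 := by
        gcongr
        exact orliczModular_inv_smul_le_one_of_luxemburgNorm_lt hmono hcont h0 hΔ hg ht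
    _ = ENNReal.ofReal t := mul_one _

variable {ι : Type*} {l : Filter ι}

lemma tendsto_orliczModular_of_tendsto_luxemburgNorm (hconv : ConvexOn ℝ (Set.Ici 0) φ)
    (hmono : MonotoneOn φ (Set.Ici 0)) (hcont : ContinuousOn φ (Set.Ici 0)) (h0 : φ 0 = 0)
    {K : ℝ≥0} (hΔ : DeltaTwoCondition φ K) {g : ι → X → ℝ} (hg : ∀ n, MemOrlicz φ μ (g n))
    (h : Tendsto (fun n => luxemburgNorm φ μ (g n)) l (𝓝 0)) :
    Tendsto (fun n => orliczModular φ μ (g n)) l (𝓝 0) := by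
  refine ENNReal.tendsto_nhds_zero.2 fun ε hε => ?_
  obtain ⟨r, -, hr, hrε⟩ := ENNReal.lt_iff_exists_real_btwn.1 hε
  filter_upwards [(tendsto_order.1 h).2 _ (lt_min (ENNReal.ofReal_pos.1 hr) one_pos)] with n hn
  calc orliczModular φ μ (g n) ≤ ENNReal.ofReal (min r 1) :=
        orliczModular_le_of_luxemburgNorm_lt hconv hmono hcont h0 hΔ (hg n) hn (min_le_right _ _)
    _ ≤ ε := (ENNReal.ofReal_le_ofReal (min_le_left _ _)).trans hrε.le

lemma tendsto_orliczModular_smul_of_tendsto_zero (hmono : MonotoneOn φ (Set.Ici 0)) {K : ℝ≥0}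
    (hΔ : DeltaTwoCondition φ K) {g : ι → X → ℝ}
    (h : Tendsto (fun n => orliczModular φ μ (g n)) l (𝓝 0)) (c : ℝ) :
    Tendsto (fun n => orliczModular φ μ (c • g n)) l (𝓝 0) := by
  obtain ⟨m, hm⟩ := pow_unbounded_of_one_lt |c| one_lt_two
  have hK := ENNReal.Tendsto.const_mul h (Or.inr (ENNReal.pow_ne_top (ENNReal.coe_ne_top (r := K)) (n := m)))
  rw [mul_zero] at hK
  exact tendsto_of_tendsto_of_tendsto_of_le_of_le tendsto_const_nhds hK (fun _ => zero_le)
    fun n => orliczModular_smul_le_of_abs_le_two_pow hmono hΔ hm.le (g n)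

lemma tendsto_luxemburgNorm_of_tendsto_orliczModular {g : ι → X → ℝ}
    (h : ∀ c : ℝ, Tendsto (fun n => orliczModular φ μ (c • g n)) l (𝓝 0)) :
    Tendsto (fun n => luxemburgNorm φ μ (g n)) l (𝓝 0) := by
  refine tendsto_order.2 ⟨fun c hc => Eventually.of_forall fun n =>
    hc.trans_le (luxemburgNorm_nonneg _), fun ε hε => ?_⟩
  filter_upwards [(tendsto_order.1 (h (ε / 2)⁻¹)).2 1 one_pos] with n hn
  exact (luxemburgNorm_le (half_pos hε) hn.le).trans_lt (half_lt_self hε)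

end Luxemburg

section KadecKlee

variable {X : Type*} [MeasurableSpace X] {μ : Measure X} {ι : Type*} {l : Filter ι}

theorem tendsto_lintegral_zero_of_le_of_lintegral_eq [l.NeBot] [l.IsCountablyGenerated]
    {H A : ι → X → ℝ≥0∞} {A₀ : X → ℝ≥0∞} (hH : ∀ k, Measurable (H k))
    (hA : ∀ k, Measurable (A k)) (hHA : ∀ k, H k ≤ A k)
    (hint : ∀ᶠ k in l, ∫⁻ x, A k x ∂μ = ∫⁻ x, A₀ x ∂μ) (hfin : ∫⁻ x, A₀ x ∂μ ≠ ⊤)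
    (hAlim : ∀ᵐ x ∂μ, Tendsto (fun k => A k x) l (𝓝 (A₀ x)))
    (hHlim : ∀ᵐ x ∂μ, Tendsto (fun k => H k x) l (𝓝 0)) :
    Tendsto (fun k => ∫⁻ x, H k x ∂μ) l (𝓝 0) := by
  set c := ∫⁻ x, A₀ x ∂μ
  set L := limsup (fun k => ∫⁻ x, H k x ∂μ) l
  have hsub : ∀ᶠ k in l, ∫⁻ x, A k x - H k x ∂μ = c - ∫⁻ x, H k x ∂μ := by
    filter_upwards [hint] with k hk
    rw [← hk]
    exact lintegral_sub (hH k) (ne_top_of_le_ne_top (hk ▸ hfin) (lintegral_mono (hHA k)))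
      (Eventually.of_forall (hHA k))
  -- Fatou's lemma applied to `A k - H k → A₀`
  have hfatou : c ≤ c - L :=
    calc c = ∫⁻ x, liminf (fun k => A k x - H k x) l ∂μ := by
          refine lintegral_congr_ae ?_
          filter_upwards [hAlim, hHlim] with x hAx hHx
          simpa using (ENNReal.Tendsto.sub hAx hHx (Or.inr zero_ne_top)).liminf_eq.symm
      _ ≤ liminf (fun k => ∫⁻ x, A k x - H k x ∂μ) l :=
          lintegral_liminf_le fun k => (hA k).sub (hH k)
      _ = liminf (fun k => c - ∫⁻ x, H k x ∂μ) l := liminf_congr hsub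
      _ = c - L := ENNReal.liminf_const_sub l _ hfin
  have hLc : L ≤ c := limsup_le_of_le (by isBoundedDefault) <| by
    filter_upwards [hint] with k hk
    exact hk ▸ lintegral_mono (hHA k)
  have hL : L = 0 := by
    refine nonpos_iff_eq_zero.1 (ENNReal.le_of_add_le_add_left hfin ?_)
    calc c + L ≤ c - L + L := add_le_add_left hfatou L
      _ = c + 0 := by rw [tsub_add_cancel_of_le hLc, add_zero]
  exact tendsto_of_le_liminf_of_limsup_le zero_le hL.le

variable {φ : ℝ → ℝ}

lemma tendsto_orliczModular_sub_of_ae_tendsto [l.NeBot] [l.IsCountablyGenerated]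
    (hmono : MonotoneOn φ (Set.Ici 0)) (hcont : ContinuousOn φ (Set.Ici 0)) (h0 : φ 0 = 0)
    {K : ℝ≥0} (hΔ : DeltaTwoCondition φ K) {w : ι → X → ℝ} {v : X → ℝ}
    (hw : ∀ k, Measurable (w k)) (hv : Measurable v)
    (hwv : ∀ᶠ k in l, orliczModular φ μ (w k) = orliczModular φ μ v)
    (hv_fin : orliczModular φ μ v ≠ ⊤)
    (hae : ∀ᵐ x ∂μ, Tendsto (fun k => w k x) l (𝓝 (v x))) :
    Tendsto (fun k => orliczModular φ μ (w k - v)) l (𝓝 0) := by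
  have hφ := continuous_ofReal_comp_abs hcont
  have hint : ∀ g : X → ℝ, Measurable g → ∫⁻ x, K * (ENNReal.ofReal (φ |g x|) +
      ENNReal.ofReal (φ |v x|)) ∂μ = K * (orliczModular φ μ g + orliczModular φ μ v) :=
    fun g hg => by
      rw [lintegral_const_mul' _ _ ENNReal.coe_ne_top,
        lintegral_add_left (measurable_ofReal_comp_abs hcont hg)]
      rfl
  refine tendsto_lintegral_zero_of_le_of_lintegral_eq
    (H := fun k x => ENNReal.ofReal (φ |w k x - v x|))
    (A := fun k x => K * (ENNReal.ofReal (φ |w k x|) + ENNReal.ofReal (φ |v x|)))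
    (A₀ := fun x => K * (ENNReal.ofReal (φ |v x|) + ENNReal.ofReal (φ |v x|)))
    (fun k => measurable_ofReal_comp_abs hcont ((hw k).sub hv))
    (fun k => ((measurable_ofReal_comp_abs hcont (hw k)).add
      (measurable_ofReal_comp_abs hcont hv)).const_mul _)
    (fun k x => ?_) ?_ ?_ ?_ ?_
  · have hφ0 : ∀ s : ℝ, 0 ≤ φ |s| := fun s => nonneg_of_monotoneOn_Ici hmono h0 (abs_nonneg s)
    dsimp only
    rw [← ENNReal.ofReal_add (hφ0 _) (hφ0 _), ← ENNReal.ofReal_coe_nnreal,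
      ← ENNReal.ofReal_mul K.coe_nonneg]
    exact ENNReal.ofReal_le_ofReal (hΔ.abs_sub_le hmono h0 _ _)
  · filter_upwards [hwv] with k hk
    rw [hint _ (hw k), hint _ hv, hk]
  · rw [hint _ hv]
    exact ENNReal.mul_ne_top ENNReal.coe_ne_top (ENNReal.add_ne_top.2 ⟨hv_fin, hv_fin⟩)
  · filter_upwards [hae] with x hx
    exact ENNReal.Tendsto.const_mul (((hφ.tendsto _).comp hx).add tendsto_const_nhds)
      (Or.inr ENNReal.coe_ne_top)
  · filter_upwards [hae] with x hx
    have := (hφ.tendsto 0).comp (tendsto_sub_nhds_zero_iff.2 hx)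
    rwa [abs_zero, h0, ENNReal.ofReal_zero] at this

lemma tendsto_luxemburgNorm_sub_of_luxemburgNorm_eq_zero (hconv : ConvexOn ℝ (Set.Ici 0) φ)
    (hmono : MonotoneOn φ (Set.Ici 0)) (hcont : ContinuousOn φ (Set.Ici 0)) (h0 : φ 0 = 0)
    {K : ℝ≥0} (hΔ : DeltaTwoCondition φ K) {f : X → ℝ} {fn : ι → X → ℝ}
    (hf : MemOrlicz φ μ f) (hfn : ∀ n, MemOrlicz φ μ (fn n)) (hf0 : luxemburgNorm φ μ f = 0)
    (hnorm : Tendsto (fun n => luxemburgNorm φ μ (fn n)) l (𝓝 0)) :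
    Tendsto (fun n => luxemburgNorm φ μ (fn n - f)) l (𝓝 0) := by
  have hfn0 := tendsto_orliczModular_of_tendsto_luxemburgNorm hconv hmono hcont h0 hΔ hfn hnorm
  have hf0' := tendsto_orliczModular_of_tendsto_luxemburgNorm hconv hmono hcont h0 hΔ
    (fun _ : ι => hf) (l := l) (hf0 ▸ tendsto_const_nhds)
  refine tendsto_luxemburgNorm_of_tendsto_orliczModular fun c => ?_
  have hsum := (tendsto_orliczModular_smul_of_tendsto_zero hmono hΔ hfn0 (2 * c)).add
    (tendsto_orliczModular_smul_of_tendsto_zero hmono hΔ hf0' (2 * c))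
  rw [add_zero] at hsum
  refine tendsto_of_tendsto_of_tendsto_of_le_of_le tendsto_const_nhds hsum (fun _ => zero_le)
    fun n => ?_
  have hle := orliczModular_le_add (μ := μ) hmono hcont h0 (u := c • (fn n - f))
    (q := c • f) ((hfn n).1.const_smul c) fun x => by
      simpa [mul_sub] using abs_sub (c * fn n x) (c * f x)
  rwa [smul_smul, smul_smul] at hle

lemma orliczModular_smul_sub_le_of_pos (hmono : MonotoneOn φ (Set.Ici 0))
    (hcont : ContinuousOn φ (Set.Ici 0)) (h0 : φ 0 = 0) {f g : X → ℝ} (hf : Measurable f)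
    (hg : Measurable g) {a b C : ℝ} (ha : 0 < a) (hb : 0 < b) (hbC : b ≤ C) (c : ℝ) :
    orliczModular φ μ (c • (g - f)) ≤
      orliczModular φ μ ((2 * c * C) • (b⁻¹ • g - a⁻¹ • f)) +
        orliczModular φ μ ((2 * c * (b - a) * a⁻¹) • f) := by
  have hsplit : ∀ x, c * (g x - f x) =
      c * b * (b⁻¹ * g x - a⁻¹ * f x) + c * (b - a) * a⁻¹ * f x := fun x => by
    field_simp
    ring
  calc orliczModular φ μ (c • (g - f))
      ≤ orliczModular φ μ ((2 : ℝ) • (c * b) • (b⁻¹ • g - a⁻¹ • f)) +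
          orliczModular φ μ ((2 : ℝ) • (c * (b - a) * a⁻¹) • f) :=
        orliczModular_le_add hmono hcont h0
          (((hg.const_smul _).sub (hf.const_smul _)).const_smul _) fun x => by
            simpa [hsplit x] using abs_add_le (c * b * (b⁻¹ * g x - a⁻¹ * f x))
              (c * (b - a) * a⁻¹ * f x)
    _ ≤ _ := by
        rw [smul_smul, smul_smul, mul_assoc 2 c C,
          show (2 : ℝ) * (c * (b - a) * a⁻¹) = 2 * c * (b - a) * a⁻¹ by ring]
        refine add_le_add_left (orliczModular_smul_mono hmono ?_ _) _
        rw [abs_mul, abs_mul 2 (c * C), abs_mul c b, abs_mul c C, abs_of_pos hb,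
          abs_of_pos (hb.trans_le hbC)]
        gcongr

lemma tendsto_luxemburgNorm_sub_of_ae_tendsto_of_pos [l.NeBot] [l.IsCountablyGenerated]
    (hmono : MonotoneOn φ (Set.Ici 0)) (hcont : ContinuousOn φ (Set.Ici 0)) (h0 : φ 0 = 0)
    {K : ℝ≥0} (hΔ : DeltaTwoCondition φ K) {f : X → ℝ} {fn : ι → X → ℝ}
    (hf : MemOrlicz φ μ f) (hfn : ∀ n, MemOrlicz φ μ (fn n)) (ha : 0 < luxemburgNorm φ μ f)
    (hnorm : Tendsto (fun n => luxemburgNorm φ μ (fn n)) l (𝓝 (luxemburgNorm φ μ f)))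
    (hae : ∀ᵐ x ∂μ, Tendsto (fun n => fn n x) l (𝓝 (f x))) :
    Tendsto (fun n => luxemburgNorm φ μ (fn n - f)) l (𝓝 0) := by
  set a := luxemburgNorm φ μ f
  set b := fun n => luxemburgNorm φ μ (fn n)
  have hb : ∀ᶠ n in l, 0 < b n ∧ b n < a + 1 := hnorm (Ioo_mem_nhds ha (lt_add_one a))
  have hw : Tendsto (fun n => orliczModular φ μ ((b n)⁻¹ • fn n - a⁻¹ • f)) l (𝓝 0) := by
    refine tendsto_orliczModular_sub_of_ae_tendsto hmono hcont h0 hΔ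
      (fun n => (hfn n).1.const_smul _) (hf.1.const_smul _) ?_
      (orliczModular_smul_lt_top hmono hΔ hf _).ne ?_
    · filter_upwards [hb] with n hn
      rw [orliczModular_inv_luxemburgNorm_smul hmono hcont h0 hΔ (hfn n) hn.1,
        orliczModular_inv_luxemburgNorm_smul hmono hcont h0 hΔ hf ha]
    · filter_upwards [hae] with x hx
      exact (hnorm.inv₀ ha.ne').mul hx
  refine tendsto_luxemburgNorm_of_tendsto_orliczModular fun c => ?_
  have hscal : Tendsto (fun n => 2 * c * (b n - a) * a⁻¹) l (𝓝 0) := by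
    simpa using ((hnorm.sub_const a).const_mul (2 * c)).mul_const a⁻¹
  have hsum := (tendsto_orliczModular_smul_of_tendsto_zero hmono hΔ hw (2 * c * (a + 1))).add
    (((continuous_orliczModular_smul hmono hcont hΔ hf).tendsto 0).comp hscal)
  rw [orliczModular_zero_smul h0, add_zero] at hsum
  refine tendsto_of_tendsto_of_tendsto_of_le_of_le' tendsto_const_nhds hsum
    (Eventually.of_forall fun _ => zero_le) ?_
  filter_upwards [hb] with n hn
  exact orliczModular_smul_sub_le_of_pos hmono hcont h0 hf.1 (hfn n).1 ha hn.1 hn.2.le c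

lemma tendsto_luxemburgNorm_sub_of_ae_tendsto [l.NeBot] [l.IsCountablyGenerated]
    (hconv : ConvexOn ℝ (Set.Ici 0) φ) (hmono : MonotoneOn φ (Set.Ici 0))
    (hcont : ContinuousOn φ (Set.Ici 0)) (h0 : φ 0 = 0) {K : ℝ≥0} (hΔ : DeltaTwoCondition φ K)
    {f : X → ℝ} {fn : ι → X → ℝ} (hf : MemOrlicz φ μ f) (hfn : ∀ n, MemOrlicz φ μ (fn n))
    (hnorm : Tendsto (fun n => luxemburgNorm φ μ (fn n)) l (𝓝 (luxemburgNorm φ μ f)))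
    (hae : ∀ᵐ x ∂μ, Tendsto (fun n => fn n x) l (𝓝 (f x))) :
    Tendsto (fun n => luxemburgNorm φ μ (fn n - f)) l (𝓝 0) := by
  rcases (luxemburgNorm_nonneg f).eq_or_lt with ha | ha
  · exact tendsto_luxemburgNorm_sub_of_luxemburgNorm_eq_zero hconv hmono hcont h0 hΔ hf hfn
      ha.symm (ha ▸ hnorm)
  · exact tendsto_luxemburgNorm_sub_of_ae_tendsto_of_pos hmono hcont h0 hΔ hf hfn ha hnorm hae

lemma tendstoInMeasure_of_tendsto_measure_lt_abs {f : ι → X → ℝ} {g : X → ℝ}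
    (h : ∀ ε > (0 : ℝ), Tendsto (fun n => μ {x | ε < |f n x - g x|}) l (𝓝 0)) :
    TendstoInMeasure μ f l g := by
  refine tendstoInMeasure_iff_dist.2 fun ε hε => ?_
  refine tendsto_of_tendsto_of_tendsto_of_le_of_le tendsto_const_nhds (h (ε / 2) (half_pos hε))
    (fun _ => zero_le) fun n => measure_mono fun x (hx : ε ≤ dist _ _) => ?_
  rw [Real.dist_eq] at hx
  exact (half_lt_self hε).trans_le hx

end KadecKlee

theorem kadec_klee_orlicz_general
    {X : Type*} [MeasurableSpace X] (μ : Measure X) (φ : ℝ → ℝ)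
    (hconv : ConvexOn ℝ (Set.Ici 0) φ)
    (hmono : MonotoneOn φ (Set.Ici 0))
    (hcont : ContinuousOn φ (Set.Ici 0))
    (h0 : φ 0 = 0)
    (hΔ2 : ∃ k > 0, ∀ u > 0, φ (2 * u) ≤ k * φ u)
    (f : X → ℝ) (fn : ℕ → X → ℝ)
    (hf : MemOrlicz φ μ f) (hfn : ∀ n, MemOrlicz φ μ (fn n))
    (hnorm : Tendsto (fun n => luxemburgNorm φ μ (fn n)) atTop
      (nhds (luxemburgNorm φ μ f)))
    (hmeas : ∀ ε > (0 : ℝ),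
      Tendsto (fun n => μ {x | ε < |fn n x - f x|}) atTop (nhds 0)) :
    Tendsto (fun n => luxemburgNorm φ μ (fun x => fn n x - f x)) atTop (nhds 0) := by
  obtain ⟨k, hk, hkΔ⟩ := hΔ2
  have hΔ : DeltaTwoCondition φ k.toNNReal := fun u hu => by
    rcases hu.eq_or_lt with rfl | hu
    · simp [h0]
    · rw [Real.coe_toNNReal _ hk.le]
      exact hkΔ u hu
  have hconvμ := tendstoInMeasure_of_tendsto_measure_lt_abs hmeas
  refine tendsto_of_subseq_tendsto fun ns hns => ?_
  obtain ⟨ms, hms, hae⟩ := (hconvμ.comp hns).exists_seq_tendsto_ae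
  exact ⟨ms, tendsto_luxemburgNorm_sub_of_ae_tendsto hconv hmono hcont h0 hΔ hf (fun _ => hfn _)
    ((hnorm.comp hns).comp hms.tendsto_atTop) hae⟩

/-- Kadec–Klee property for convergence in measure of (commutative) Orlicz spaces:
if `φ ∈ Δ₂`, `‖f_n‖_φ → ‖f‖_φ` and `f_n → f` in measure, then `‖f_n - f‖_φ → 0`. -/
theorem kadec_klee_orlicz
    {X : Type*} [MeasurableSpace X] (μ : Measure X) (φ : ℝ → ℝ)
    (hconv : ConvexOn ℝ (Set.Ici 0) φ)
    (hmono : MonotoneOn φ (Set.Ici 0))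
    (hcont : ContinuousOn φ (Set.Ici 0))
    (h0 : φ 0 = 0)
    (hpos : ∀ α : ℝ, 0 < α → 0 < φ α)
    (htop : Filter.Tendsto φ Filter.atTop Filter.atTop)
    (hΔ2 : ∃ k > 0, ∀ u > 0, φ (2 * u) ≤ k * φ u)
    (f : X → ℝ) (fn : ℕ → X → ℝ)
    (hf : MemOrlicz φ μ f) (hfn : ∀ n, MemOrlicz φ μ (fn n))
    (hnorm : Tendsto (fun n => luxemburgNorm φ μ (fn n)) atTop
      (nhds (luxemburgNorm φ μ f)))
    (hmeas : ∀ ε > (0 : ℝ),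
      Tendsto (fun n => μ {x | ε < |fn n x - f x|}) atTop (nhds 0)) :
    Tendsto (fun n => luxemburgNorm φ μ (fun x => fn n x - f x)) atTop (nhds 0) :=
  kadec_klee_orlicz_general μ φ hconv hmono hcont h0 hΔ2 f fn hf hfn hnorm hmeas
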